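/- For Re(a) > 0 and |y^υ/a^υ| < 1, the Laplace transform of w ↦ w^q ₖN_{s;υ}^{(p,q)}(t, yw) equals (Γ(p-s)/(a^{q+1} Γ(p-2s))) (t(a^υ - y^υ)/a^υ)^s · ₁F₁(-s, p-2s; a^υ/(t(a^υ-y^υ))), where ₁F₁ is the confluent hypergeometric function (here a terminating sum since -s is a nonpositive integer). -/

import Mathlib

open Real MeasureTheory Finset

/-- Pochhammer symbol (a)_n = a(a+1)⋯(a+n-1). -/
noncomputable def poch (a : ℝ) (n : ℕ) : ℝ := ∏ i ∈ Finset.range n, (a + i)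

/-- Generalized binomial coefficient C(a,k) = a(a-1)⋯(a-k+1)/k!. -/
noncomputable def gchoose (a : ℝ) (k : ℕ) : ℝ :=
  (∏ i ∈ Finset.range k, (a - i)) / k.factorial

/-- Konhauser polynomial of the first kind Z_s^{(χ)}(w;υ). -/
noncomputable def konZ (s : ℕ) (χ : ℝ) (υ : ℕ) (w : ℝ) : ℝ :=
  (Real.Gamma ((υ : ℝ) * (s : ℝ) + χ + 1) / s.factorial) *
    ∑ l ∈ Finset.range (s + 1),
      (-1 : ℝ) ^ l * (s.choose l : ℝ) * w ^ (υ * l) / Real.Gamma ((υ : ℝ) * (l : ℝ) + χ + 1)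

/-- Konhauser polynomial of the second kind Y_s^{(χ)}(w;υ). -/
noncomputable def konY (s : ℕ) (χ : ℝ) (υ : ℕ) (w : ℝ) : ℝ :=
  (1 / (s.factorial : ℝ)) *
    ∑ m ∈ Finset.range (s + 1), w ^ m / m.factorial *
      ∑ l ∈ Finset.range (m + 1),
        (-1 : ℝ) ^ l * (m.choose l : ℝ) * poch ((χ + (l : ℝ) + 1) / (υ : ℝ)) s

/-- Finite orthogonal polynomial N_s^{(p)}(w). -/
noncomputable def finN (s : ℕ) (p : ℝ) (w : ℝ) : ℝ :=
  (-1 : ℝ) ^ s *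
    ∑ k ∈ Finset.range (s + 1),
      (k.factorial : ℝ) * gchoose (p - (s : ℝ) - 1) k * (s.choose (s - k) : ℝ) * (-w) ^ k

/-- Generalized Laguerre polynomial L_n^{(α)}(x). -/
noncomputable def lagL (n : ℕ) (α : ℝ) (x : ℝ) : ℝ :=
  ∑ k ∈ Finset.range (n + 1),
    (-1 : ℝ) ^ k * gchoose ((n : ℝ) + α) (n - k) * x ^ k / k.factorial

/-- Finite bivariate N-Konhauser polynomial (first set) ₖN_{s;υ}^{(p,q)}(t,w). -/
noncomputable def NK (s : ℕ) (υ : ℕ) (p q : ℝ) (t w : ℝ) : ℝ :=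
  Real.Gamma (p - (s : ℝ)) *
    ∑ k ∈ Finset.range (s + 1), ∑ m ∈ Finset.range (s - k + 1),
      poch (-(s : ℝ)) (k + m) * t ^ (s - k) * w ^ (υ * m) /
        (Real.Gamma (p - 2 * (s : ℝ) + (k : ℝ)) * Real.Gamma (q + 1 + (υ : ℝ) * (m : ℝ)) *
          k.factorial * m.factorial)

/-- Finite bivariate N-Konhauser polynomial (second set) ₖ𝒩_{s;υ}^{(p,q)}(t,w). -/
noncomputable def NK2 (s : ℕ) (υ : ℕ) (p q : ℝ) (t w : ℝ) : ℝ :=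
  finN s p t * ∑ k ∈ Finset.range (s + 1), konY k q υ w

/-- Generalized Laguerre-Konhauser polynomial of Bin-Saad ᵤL_s^{(p,q)}(t,w). -/
noncomputable def LKgen (s : ℕ) (υ : ℕ) (p q : ℝ) (t w : ℝ) : ℝ :=
  (s.factorial : ℝ) *
    ∑ k ∈ Finset.range (s + 1), ∑ m ∈ Finset.range (s - k + 1),
      (-1 : ℝ) ^ (k + m) * t ^ ((k : ℝ) + p) * w ^ ((υ : ℝ) * (m : ℝ) + q) /
        ((k.factorial : ℝ) * m.factorial * (s - k - m).factorial *
          Real.Gamma ((k : ℝ) + p + 1) * Real.Gamma (q + (υ : ℝ) * (m : ℝ) + 1))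

/-- Bivariate biorthogonal Laguerre-Konhauser polynomial ₖL_{s;υ}^{(p,q)}(t,w). -/
noncomputable def KL (s : ℕ) (υ : ℕ) (p q : ℝ) (t w : ℝ) : ℝ :=
  (Real.Gamma (p + 1 + (s : ℝ)) / s.factorial) *
    ∑ k ∈ Finset.range (s + 1), ∑ m ∈ Finset.range (s - k + 1),
      poch (-(s : ℝ)) (k + m) * t ^ k * w ^ (υ * m) /
        (Real.Gamma (p + 1 + (k : ℝ)) * Real.Gamma (q + 1 + (υ : ℝ) * (m : ℝ)) *
          k.factorial * m.factorial)

lemma poch_zero (x : ℝ) : poch x 0 = 1 := by simp [poch]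

lemma poch_succ (x : ℝ) (n : ℕ) : poch x (n+1) = poch x n * (x + n) := by
  simp [poch, Finset.prod_range_succ]

lemma poch_add (x : ℝ) (k m : ℕ) : poch x (k+m) = poch x k * poch (x + k) m := by
  unfold poch
  rw [Finset.prod_range_add]
  congr 1
  exact Finset.prod_congr rfl (fun i _ => by push_cast; ring)

lemma poch_pos {x : ℝ} (hx : 0 < x) (n : ℕ) : 0 < poch x n := by
  unfold poch
  exact Finset.prod_pos (fun i _ => by positivity)

lemma poch_neg_nat (n : ℕ) : ∀ m, m ≤ n → poch (-(n:ℝ)) m = (-1)^m * (n.choose m) * m.factorial := by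
  intro m
  induction m with
  | zero => simp [poch_zero]
  | succ m ih =>
    intro hm
    rw [poch_succ, ih (le_of_lt hm)]
    have hc : ((n.choose (m+1) : ℝ)) * (m+1) = (n.choose m) * ((n:ℝ) - m) := by
      have := Nat.choose_succ_right_eq n m
      have hcast : ((n.choose (m+1) * (m+1) : ℕ) : ℝ) = ((n.choose m * (n - m) : ℕ) : ℝ) := by
        exact_mod_cast congrArg (Nat.cast : ℕ → ℝ) this
      push_cast [Nat.cast_sub (le_of_lt hm)] at hcast
      linarith [hcast]
    have : ((m+1).factorial : ℝ) = (m+1) * m.factorial := by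
      push_cast [Nat.factorial_succ]; ring
    rw [this]
    rw [pow_succ]
    linear_combination ((-1:ℝ)^m * (m.factorial:ℝ)) * hc

lemma binom_sum (n : ℕ) (r : ℝ) :
    ∑ m ∈ Finset.range (n+1), poch (-(n:ℝ)) m * r^m / m.factorial = (1-r)^n := by
  have h := add_pow (-r) 1 n
  have h2 : (1 - r)^n = ∑ m ∈ Finset.range (n+1), (-r)^m * (n.choose m) := by
    rw [show (1:ℝ) - r = -r + 1 by ring, h]
    exact Finset.sum_congr rfl (fun m _ => by rw [one_pow]; ring)
  rw [h2]
  refine Finset.sum_congr rfl (fun m hm => ?_)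
  have hm' : m ≤ n := Nat.lt_succ_iff.mp (Finset.mem_range.mp hm)
  rw [poch_neg_nat n m hm']
  have : (m.factorial : ℝ) ≠ 0 := by positivity
  field_simp
  ring

lemma Gamma_add_nat {x : ℝ} (hx : 0 < x) (n : ℕ) :
    Real.Gamma (x + n) = Real.Gamma x * poch x n := by
  induction n with
  | zero => simp [poch_zero]
  | succ n ih =>
    have : x + ((n:ℝ)+1) = (x + n) + 1 := by ring
    rw [show ((n+1:ℕ):ℝ) = (n:ℝ)+1 by push_cast; ring, this,
      Real.Gamma_add_one (by positivity), ih, poch_succ]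
    ring

lemma laplace_rpow {a c : ℝ} (ha : 0 < a) (hc : -1 < c) :
    ∫ w in Set.Ioi (0:ℝ), Real.exp (-(a*w)) * w ^ c = Real.Gamma (c+1) / a^(c+1) := by
  have h := Real.integral_rpow_mul_exp_neg_mul_Ioi (a := c+1) (r := a) (by linarith) ha
  rw [show c+1-1 = c by ring] at h
  have : ∫ w in Set.Ioi (0:ℝ), Real.exp (-(a*w)) * w ^ c
      = ∫ w in Set.Ioi (0:ℝ), w ^ c * Real.exp (-(a*w)) := by
    congr 1; funext w; ring
  rw [this, h, Real.div_rpow (by norm_num) ha.le, Real.one_rpow]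
  ring

lemma laplace_integrable {a c : ℝ} (ha : 0 < a) (hc : -1 < c) :
    IntegrableOn (fun w => Real.exp (-(a*w)) * w ^ c) (Set.Ioi (0:ℝ)) := by
  have h := integrableOn_rpow_mul_exp_neg_mul_rpow (p := 1) hc one_pos ha
  refine h.congr_fun (fun x hx => ?_) measurableSet_Ioi
  simp only [Real.rpow_one]
  ring_nf

lemma final_alg (G P aq B pk kf t u : ℝ) (s k : ℕ) (hk : k ≤ s)
    (ht : t ≠ 0) (hu : u ≠ 0) (haq : aq ≠ 0) (hB : B ≠ 0) (hpk : pk ≠ 0) (hkf : kf ≠ 0) :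
    G * P * t ^ (s-k) / (aq * B * pk * kf) * u ^ (s-k)
      = G / (aq * B) * (t*u) ^ s * (P * ((t*u)⁻¹) ^ k / (pk * kf)) := by
  rw [show (t*u)^s = (t*u)^(s-k) * (t*u)^k from by rw [← pow_add, Nat.sub_add_cancel hk],
     inv_pow, mul_pow t u (s-k)]
  have h1 : (t*u)^k ≠ 0 := pow_ne_zero _ (mul_ne_zero ht hu)
  field_simp

theorem NK_laplace_hyp (υ : ℕ) (hυ : 0 < υ) (p q : ℝ) (hq : q > -1) (s : ℕ)
    (hs : (s : ℝ) < (p - 1) / 2) (a y t : ℝ) (ha : 0 < a) (hy : 0 < y) (hya : y < a)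
    (ht : 0 < t) :
    ∫ w in Set.Ioi (0 : ℝ), Real.exp (-(a * w)) * (w ^ q * NK s υ p q t (y * w)) =
      Real.Gamma (p - (s : ℝ)) / (a ^ (q + 1) * Real.Gamma (p - 2 * (s : ℝ))) *
        (t * ((a ^ υ - y ^ υ) / a ^ υ)) ^ s *
        ∑ k ∈ Finset.range (s + 1),
          poch (-(s : ℝ)) k * (a ^ υ / (t * (a ^ υ - y ^ υ))) ^ k /
            (poch (p - 2 * (s : ℝ)) k * k.factorial) := by
  -- notations and basic facts
  set A : ℝ := a ^ υ with hAdef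
  set Y : ℝ := y ^ υ with hYdef
  have hA : 0 < A := by positivity
  have hY : 0 < Y := by positivity
  have hYA : Y < A := pow_lt_pow_left₀ hya hy.le hυ.ne'
  have hps : (1:ℝ) < p - 2 * s := by linarith [hs]
  have hB : 0 < Real.Gamma (p - 2 * (s:ℝ)) := Real.Gamma_pos_of_pos (by linarith)
  have hc : ∀ m : ℕ, (-1:ℝ) < q + (υ:ℝ) * m := by
    intro m; have : (0:ℝ) ≤ (υ:ℝ) * m := by positivity
    linarith
  -- the coefficient
  set C : ℕ → ℕ → ℝ := fun k m =>
    Real.Gamma (p - (s:ℝ)) * (poch (-(s : ℝ)) (k + m) * t ^ (s - k) * y ^ (υ * m) /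
        (Real.Gamma (p - 2 * (s : ℝ) + (k : ℝ)) * Real.Gamma (q + 1 + (υ : ℝ) * (m : ℝ)) *
          k.factorial * m.factorial)) with hC
  -- Step 1: rewrite the integrand on Ioi 0 as a finite sum
  have hsplit : ∀ w ∈ Set.Ioi (0:ℝ),
      Real.exp (-(a * w)) * (w ^ q * NK s υ p q t (y * w)) =
      ∑ k ∈ Finset.range (s + 1), ∑ m ∈ Finset.range (s - k + 1),
        C k m * (Real.exp (-(a*w)) * w ^ (q + (υ:ℝ) * m)) := by
    intro w hw
    have hw' : (0:ℝ) < w := hw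
    unfold NK
    simp only [Finset.mul_sum, Finset.sum_mul, hC]
    refine Finset.sum_congr rfl fun k _ => Finset.sum_congr rfl fun m _ => ?_
    have hpow : w ^ (q + (υ:ℝ) * m) = w ^ q * w ^ (υ * m) := by
      rw [Real.rpow_add hw', ← Real.rpow_natCast w (υ*m)]
      push_cast; ring_nf
    rw [hpow, mul_pow]
    ring
  rw [MeasureTheory.setIntegral_congr_fun measurableSet_Ioi hsplit]
  rw [MeasureTheory.integral_finset_sum _ (fun k _ => integrable_finset_sum _
    (fun m _ => ((laplace_integrable ha (hc m)).const_mul (C k m))))]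
  have hstep : ∀ k ∈ Finset.range (s+1),
      (∫ w in Set.Ioi (0:ℝ), ∑ m ∈ Finset.range (s - k + 1),
        C k m * (Real.exp (-(a*w)) * w ^ (q + (υ:ℝ) * m)))
      = ∑ m ∈ Finset.range (s - k + 1),
        C k m * (Real.Gamma (q + (υ:ℝ)*m + 1) / a ^ (q + (υ:ℝ)*m + 1)) := by
    intro k _
    rw [MeasureTheory.integral_finset_sum _
      (fun m _ => ((laplace_integrable ha (hc m)).const_mul (C k m)))]
    refine Finset.sum_congr rfl fun m _ => ?_
    rw [MeasureTheory.integral_const_mul, laplace_rpow ha (hc m)]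
  rw [Finset.sum_congr rfl hstep]
  -- Step 2: algebra
  set G := Real.Gamma (p - (s:ℝ)) with hG
  set B := Real.Gamma (p - 2 * (s:ℝ)) with hBdef
  set R : ℝ := Y / A with hRdef
  have hR1 : R < 1 := (div_lt_one hA).mpr hYA
  have hR0 : 0 < R := by positivity
  have haq : (0:ℝ) < a ^ (q+1) := Real.rpow_pos_of_pos ha _
  have hT : (0:ℝ) < t * ((A - Y)/A) := by
    have : 0 < (A - Y)/A := div_pos (by linarith) hA
    positivity
  rw [Finset.mul_sum]
  refine Finset.sum_congr rfl fun k hk => ?_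
  have hk' : k ≤ s := Nat.lt_succ_iff.mp (Finset.mem_range.mp hk)
  have hpochk : 0 < poch (p - 2*(s:ℝ)) k := poch_pos (by linarith) k
  -- transform each inner term
  have e1 : ∀ m ∈ Finset.range (s - k + 1),
      C k m * (Real.Gamma (q + (υ:ℝ)*m + 1) / a ^ (q + (υ:ℝ)*m + 1))
      = (G * poch (-(s:ℝ)) k * t ^ (s-k) / (a ^ (q+1) * B * poch (p - 2*(s:ℝ)) k * k.factorial))
        * (poch (-((s-k : ℕ):ℝ)) m * R ^ m / m.factorial) := by
    intro m _
    have hGam : Real.Gamma (p - 2*(s:ℝ) + (k:ℝ)) = B * poch (p - 2*(s:ℝ)) k :=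
      Gamma_add_nat (by linarith) k
    have hGq : 0 < Real.Gamma (q + 1 + (υ:ℝ) * m) := Real.Gamma_pos_of_pos (by
      have : (0:ℝ) ≤ (υ:ℝ) * m := by positivity
      linarith)
    have hrpow : a ^ (q + (υ:ℝ)*m + 1) = a ^ (q+1) * A ^ m := by
      rw [show q + (υ:ℝ)*m + 1 = (q+1) + ((υ*m : ℕ):ℝ) by push_cast; ring,
        Real.rpow_add ha, Real.rpow_natCast, pow_mul]
    have hpochsplit : poch (-(s:ℝ)) (k+m) = poch (-(s:ℝ)) k * poch (-((s-k:ℕ):ℝ)) m := by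
      rw [poch_add]
      congr 2
      push_cast [Nat.cast_sub hk']
      ring
    have hym : y ^ (υ * m) = Y ^ m := by rw [pow_mul]
    have hRm : (Y:ℝ) ^ m / A ^ m = R ^ m := by rw [hRdef, div_pow]
    rw [hC]
    simp only
    rw [hGam, hrpow, hpochsplit, hym,
      show q + (υ:ℝ)*m + 1 = q + 1 + (υ:ℝ)*m by ring]
    have hkf : ((k.factorial : ℝ)) ≠ 0 := by positivity
    have hmf : ((m.factorial : ℝ)) ≠ 0 := by positivity
    have hAm : (A:ℝ) ^ m ≠ 0 := by positivity
    rw [← hRm]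
    field_simp
  rw [Finset.sum_congr rfl e1, ← Finset.mul_sum, binom_sum (s-k) R]
  -- final algebraic identity in k
  have hAY' : (A - Y)/A = 1 - R := by
    rw [hRdef]; field_simp
  rw [hAY']
  have hAYpos : (0:ℝ) < A - Y := sub_pos.mpr hYA
  have hu : (1:ℝ) - R ≠ 0 := by linarith
  have hinv : A / (t * (A - Y)) = (t * (1 - R))⁻¹ := by
    rw [hRdef]
    have h1 : (1 : ℝ) - Y/A = (A - Y)/A := by field_simp
    rw [h1, show t * ((A-Y)/A) = t*(A-Y)/A by ring, inv_div]
  rw [hinv]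
  exact final_alg G (poch (-(s:ℝ)) k) (a ^ (q+1)) B (poch (p - 2*(s:ℝ)) k) (k.factorial) t
    (1 - R) s k hk' ht.ne' hu haq.ne' hB.ne' hpochk.ne' (by positivity)
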